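/- arXiv:2207.09097 — 4 statements merged into one kernel-verified Lean document; each statement's English description precedes it below -/
import Mathlib

section
/- Let X be a mean-zero Gaussian random vector in ℝᵖ with positive definite covariance matrix Σ, and let Y be a square-integrable real random variable. Fix j ∈ {1,…,p}. Write X_{-j} ∈ ℝ^{p−1} for X with its j-th coordinate deleted, Σ_{(j)} ∈ ℝ^{(p−1)×(p−1)} for Σ with its j-th row and column deleted, γ_j = E[X_j · X_{-j}] ∈ ℝ^{p−1}, β* = Σ⁻¹·E[X·Y] ∈ ℝᵖ with β*_{-j} its j-th coordinate deleted, and β^{(j)} = Σ_{(j)}⁻¹·E[X_{-j}·Y] ∈ ℝ^{p−1}. Define the dropout variable-importance estimate VI_dr(j) = E[(Y − X_{-j}ᵀβ*_{-j})²] − E[(Y − Xᵀβ*)²] and the retraining variable-importance estimate VI_rt(j) = E[(Y − X_{-j}ᵀβ^{(j)})²] − E[(Y − Xᵀβ*)²]. Then VI_dr(j) − VI_rt(j) = (γ_jᵀ Σ_{(j)}⁻¹ γ_j) / (Σ_{jj} − γ_jᵀ Σ_{(j)}⁻¹ γ_j)² · ( E[X_j·Y] − γ_jᵀ Σ_{(j)}⁻¹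 E[X_{-j}·Y] )². -/
open MeasureTheory Matrix ProbabilityTheory

section Helpers
open Real
open scoped NNReal ENNReal

lemma integral_sq_mul_exp_neg_mul_sq {b : ℝ} (hb : 0 < b) :
    ∫ x : ℝ, x ^ 2 * Real.exp (-b * x ^ 2) = Real.sqrt (π / b) / (2 * b) := by
  have hint2 : Integrable (fun x : ℝ => x ^ 2 * Real.exp (-b * x ^ 2)) := by
    have := integrable_rpow_mul_exp_neg_mul_sq hb (s := 2) (by norm_num)
    simpa [Real.rpow_natCast] using
      (by exact_mod_cast this : Integrable (fun x : ℝ => x ^ ((2:ℕ):ℝ) * Real.exp (-b * x ^ 2)))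
  have hint0 : Integrable (fun x : ℝ => Real.exp (-b * x ^ 2)) := integrable_exp_neg_mul_sq hb
  have hder : ∀ x : ℝ, HasDerivAt (fun x : ℝ => x * Real.exp (-b * x ^ 2))
      (Real.exp (-b * x ^ 2) - 2 * b * (x ^ 2 * Real.exp (-b * x ^ 2))) x := by
    intro x
    have h1 : HasDerivAt (fun x : ℝ => -b * x ^ 2) (-b * (2 * x)) x := by
      simpa using ((hasDerivAt_pow 2 x).const_mul (-b))
    have h2 := (h1.exp)
    have h3 : HasDerivAt (fun y : ℝ => y * Real.exp (-b * y ^ 2))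
        (1 * Real.exp (-b * x ^ 2) + x * (Real.exp (-b * x ^ 2) * (-b * (2 * x)))) x :=
      (hasDerivAt_id' x).fun_mul h2
    convert h3 using 1
    ring
  have hzero := integral_eq_zero_of_hasDerivAt_of_integrable hder
    (hint0.sub (hint2.const_mul (2 * b)))
    (by simpa [Real.rpow_natCast, mul_comm] using
      (integrable_rpow_mul_exp_neg_mul_sq hb (s := 1) (by norm_num)))
  rw [integral_sub hint0 (hint2.const_mul (2 * b)), MeasureTheory.integral_const_mul,
    integral_gaussian] at hzero
  have hb' : (2 : ℝ) * b ≠ 0 := by positivity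
  field_simp at hzero ⊢
  linarith


lemma integrable_sq_gaussianReal (v : ℝ≥0) :
    Integrable (fun x : ℝ => x ^ 2) (gaussianReal 0 v) := by
  by_cases hv : v = 0
  · rw [hv, gaussianReal_zero_var]
    exact (integrable_const ((0:ℝ)^2)).congr (ae_eq_dirac (fun x : ℝ => x ^ 2)).symm
  rw [gaussianReal_of_var_ne_zero _ hv]
  rw [integrable_withDensity_iff (measurable_gaussianPDF _ _)
    (ae_of_all _ fun x => ENNReal.ofReal_lt_top)]
  have : ∀ x : ℝ, x ^ 2 * (gaussianPDF 0 v x).toReal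
      = (Real.sqrt (2 * π * v))⁻¹ * (x ^ 2 * Real.exp (-(2 * v : ℝ)⁻¹ * x ^ 2)) := by
    intro x
    rw [gaussianPDF, ENNReal.toReal_ofReal (gaussianPDFReal_nonneg _ _ _), gaussianPDFReal]
    have : -(x - 0) ^ 2 / (2 * v) = -(2 * (v:ℝ))⁻¹ * x ^ 2 := by ring
    rw [this]
    ring
  simp only [this]
  have hb : (0:ℝ) < (2 * (v:ℝ))⁻¹ := by
    have : (0:ℝ) < (v:ℝ) := lt_of_le_of_ne (v.coe_nonneg) (by exact_mod_cast (Ne.symm hv))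
    positivity
  have hint2 : Integrable (fun x : ℝ => x ^ 2 * Real.exp (-(2 * (v:ℝ))⁻¹ * x ^ 2)) := by
    have := integrable_rpow_mul_exp_neg_mul_sq hb (s := 2) (by norm_num)
    simpa [Real.rpow_natCast] using
      (by exact_mod_cast this :
        Integrable (fun x : ℝ => x ^ ((2:ℕ):ℝ) * Real.exp (-(2 * (v:ℝ))⁻¹ * x ^ 2)))
  exact hint2.const_mul _


lemma integral_sq_gaussianReal (v : ℝ≥0) :
    ∫ x, x ^ 2 ∂(gaussianReal 0 v) = v := by
  by_cases hv : v = 0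
  · simp [hv]
  have hvpos : (0:ℝ) < (v:ℝ) := lt_of_le_of_ne (v.coe_nonneg) (by exact_mod_cast (Ne.symm hv))
  rw [gaussianReal_of_var_ne_zero _ hv]
  have hpdf : gaussianPDF 0 v = fun x => ((gaussianPDFReal 0 v x).toNNReal : ℝ≥0∞) := by
    funext x; rw [gaussianPDF, ENNReal.ofReal]
  rw [hpdf, integral_withDensity_eq_integral_smul
    ((measurable_gaussianPDFReal 0 v).real_toNNReal)]
  have : ∀ x : ℝ, (Real.toNNReal (gaussianPDFReal 0 v x)) • (x ^ 2)
      = (Real.sqrt (2 * π * v))⁻¹ * (x ^ 2 * Real.exp (-(2 * (v:ℝ))⁻¹ * x ^ 2)) := by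
    intro x
    rw [NNReal.smul_def, smul_eq_mul, Real.coe_toNNReal _ (gaussianPDFReal_nonneg _ _ _),
      gaussianPDFReal]
    have : -(x - 0) ^ 2 / (2 * v) = -(2 * (v:ℝ))⁻¹ * x ^ 2 := by ring
    rw [this]; ring
  simp only [this]
  have hb : (0:ℝ) < (2 * (v:ℝ))⁻¹ := by positivity
  rw [MeasureTheory.integral_const_mul, integral_sq_mul_exp_neg_mul_sq hb]
  rw [show π / (2 * (v:ℝ))⁻¹ = 2 * π * v by field_simp]
  have h2v : Real.sqrt (2 * π * v) ≠ 0 := by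
    have : (0:ℝ) < 2 * π * v := by positivity
    positivity
  field_simp


/-- extension by zero at coordinate `j` -/
def extFun {p : ℕ} (j : Fin p) (v : {i : Fin p // i ≠ j} → ℝ) (i : Fin p) : ℝ :=
  if h : i = j then 0 else v ⟨i, h⟩

@[simp] lemma extFun_self {p : ℕ} (j : Fin p) (v : {i : Fin p // i ≠ j} → ℝ) :
    extFun j v j = 0 := dif_pos rfl

@[simp] lemma extFun_val {p : ℕ} (j : Fin p) (v : {i : Fin p // i ≠ j} → ℝ)
    (i : {i : Fin p // i ≠ j}) : extFun j v i.val = v i := by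
  rw [extFun, dif_neg i.prop]

lemma sum_split {p : ℕ} (j : Fin p) (g : Fin p → ℝ) :
    (∑ k, g k) = g j + ∑ k : {i : Fin p // i ≠ j}, g k.val := by
  rw [← Finset.add_sum_erase _ _ (Finset.mem_univ j)]
  congr 1
  rw [Finset.sum_subtype (p := fun i => i ≠ j) _ (fun x => by simp) g]

lemma dot_symm {n : Type*} [Fintype n] (M : Matrix n n ℝ) (h : M.IsHermitian)
    (x y : n → ℝ) : x ⬝ᵥ (M *ᵥ y) = y ⬝ᵥ (M *ᵥ x) := by
  simp only [Matrix.mulVec, dotProduct, Finset.mul_sum]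
  rw [Finset.sum_comm]
  refine Finset.sum_congr rfl fun i _ => Finset.sum_congr rfl fun k _ => ?_
  have hik : M i k = M k i := by simpa using h.apply k i
  rw [hik]; ring

lemma l2_mul_integrable {α : Type*} [MeasurableSpace α] {μ : Measure α} {f g : α → ℝ}
    (hf : MemLp f 2 μ) (hg : MemLp g 2 μ) : Integrable (fun x => f x * g x) μ := by
  have hbi : Integrable (fun x => (f x ^ 2 + g x ^ 2) / 2) μ :=
    (hf.integrable_sq.add hg.integrable_sq).div_const 2
  refine Integrable.mono' hbi
    (hf.aestronglyMeasurable.mul hg.aestronglyMeasurable) (ae_of_all _ fun x => ?_)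
  rw [Real.norm_eq_abs, abs_mul]
  nlinarith [sq_nonneg (|f x| - |g x|), sq_abs (f x), sq_abs (g x), abs_nonneg (f x),
    abs_nonneg (g x)]

end Helpers

/-- **Proposition 1.** For a mean-zero Gaussian vector `X` with positive
definite covariance `Σ` and square-integrable response `Y`, the difference between the
dropout and retraining variable-importance estimates for variable `j` equals
`(γⱼᵀΣ₍ⱼ₎⁻¹γⱼ)/(Σⱼⱼ − γⱼᵀΣ₍ⱼ₎⁻¹γⱼ)² · (E[XⱼY] − γⱼᵀΣ₍ⱼ₎⁻¹E[X₋ⱼY])²`. -/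
theorem dropout_minus_retrain {Ωs : Type*} [MeasurableSpace Ωs] (μ : Measure Ωs)
    [IsProbabilityMeasure μ] {p : ℕ}
    (X : Ωs → Fin p → ℝ) (hXmeas : Measurable X)
    (Y : Ωs → ℝ) (hYmeas : Measurable Y) (hY2 : MemLp Y 2 μ)
    (Sig : Matrix (Fin p) (Fin p) ℝ) (hSigpd : Sig.PosDef)
    -- `X` is a mean-zero Gaussian vector with covariance `Sig`:
    -- every linear functional of `X` is a centered Gaussian with the induced variance
    (hgauss : ∀ a : Fin p → ℝ,
      Measure.map (fun ω => a ⬝ᵥ X ω) μ = gaussianReal 0 (a ⬝ᵥ (Sig *ᵥ a)).toNNReal)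
    (j : Fin p)
    -- `Σ` with the `j`-th row and column deleted
    (Sigj : Matrix {i : Fin p // i ≠ j} {i : Fin p // i ≠ j} ℝ)
    (hSigj : Sigj = Sig.submatrix Subtype.val Subtype.val)
    -- `γⱼ = E[Xⱼ · X₋ⱼ]`
    (γ : {i : Fin p // i ≠ j} → ℝ)
    (hγ : γ = fun i => ∫ ω, X ω j * X ω i.val ∂μ)
    -- full-model best linear predictor coefficients `β* = Σ⁻¹E[XY]`
    (βstar : Fin p → ℝ)
    (hβstar : βstar = Sig⁻¹ *ᵥ fun i => ∫ ω, X ω i * Y ω ∂μ)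
    -- reduced-model best linear predictor coefficients `β⁽ʲ⁾ = Σ₍ⱼ₎⁻¹E[X₋ⱼY]`
    (βj : {i : Fin p // i ≠ j} → ℝ)
    (hβj : βj = Sigj⁻¹ *ᵥ fun i => ∫ ω, X ω i.val * Y ω ∂μ)
    -- dropout and retraining variable-importance estimates
    (VIdr VIrt : ℝ)
    (hVIdr : VIdr =
      (∫ ω, (Y ω - ∑ i : {i : Fin p // i ≠ j}, X ω i.val * βstar i.val) ^ 2 ∂μ)
        - ∫ ω, (Y ω - X ω ⬝ᵥ βstar) ^ 2 ∂μ)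
    (hVIrt : VIrt =
      (∫ ω, (Y ω - ∑ i : {i : Fin p // i ≠ j}, X ω i.val * βj i) ^ 2 ∂μ)
        - ∫ ω, (Y ω - X ω ⬝ᵥ βstar) ^ 2 ∂μ) :
    VIdr - VIrt =
      (γ ⬝ᵥ (Sigj⁻¹ *ᵥ γ)) / (Sig j j - γ ⬝ᵥ (Sigj⁻¹ *ᵥ γ)) ^ 2
        * ((∫ ω, X ω j * Y ω ∂μ)
            - γ ⬝ᵥ (Sigj⁻¹ *ᵥ fun i => ∫ ω, X ω i.val * Y ω ∂μ)) ^ 2 := by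
  -- measurability of linear functionals of X
  have hS : ∀ a : Fin p → ℝ, Measurable fun ω => a ⬝ᵥ X ω := by
    intro a
    simp only [dotProduct]
    exact Finset.measurable_sum _ fun i _ =>
      measurable_const.mul ((measurable_pi_apply i).comp hXmeas)
  -- L² bounds
  have hmem2 : ∀ a : Fin p → ℝ, MemLp (fun ω => a ⬝ᵥ X ω) 2 μ := by
    intro a
    refine (memLp_two_iff_integrable_sq (hS a).aestronglyMeasurable).2 ?_
    have h := integrable_sq_gaussianReal ((a ⬝ᵥ (Sig *ᵥ a)).toNNReal)
    rw [← hgauss a] at h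
    exact (integrable_map_measure (by fun_prop) (hS a).aemeasurable).1 h
  -- second moments
  have hnn : ∀ a : Fin p → ℝ, 0 ≤ a ⬝ᵥ (Sig *ᵥ a) := by
    intro a
    have := hSigpd.posSemidef.dotProduct_mulVec_nonneg a
    simpa using this
  have hsqint : ∀ a : Fin p → ℝ, ∫ ω, (a ⬝ᵥ X ω) ^ 2 ∂μ = a ⬝ᵥ (Sig *ᵥ a) := by
    intro a
    have h := integral_sq_gaussianReal ((a ⬝ᵥ (Sig *ᵥ a)).toNNReal)
    rw [← hgauss a, integral_map (hS a).aemeasurable (by fun_prop)] at h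
    rw [h, Real.coe_toNNReal _ (hnn a)]
  -- cross moments
  have hcross : ∀ a b : Fin p → ℝ,
      ∫ ω, (a ⬝ᵥ X ω) * (b ⬝ᵥ X ω) ∂μ = a ⬝ᵥ (Sig *ᵥ b) := by
    intro a b
    have hint : Integrable (fun ω => (a ⬝ᵥ X ω) * (b ⬝ᵥ X ω)) μ :=
      l2_mul_integrable (hmem2 a) (hmem2 b)
    have hexp : (fun ω => ((a + b) ⬝ᵥ X ω) ^ 2)
        = fun ω => ((a ⬝ᵥ X ω) ^ 2 + (b ⬝ᵥ X ω) ^ 2)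
            + 2 * ((a ⬝ᵥ X ω) * (b ⬝ᵥ X ω)) := by
      funext ω; rw [add_dotProduct]; ring
    have hA : Integrable (fun ω => (a ⬝ᵥ X ω) ^ 2 + (b ⬝ᵥ X ω) ^ 2) μ :=
      (hmem2 a).integrable_sq.add (hmem2 b).integrable_sq
    have hB : Integrable (fun ω => 2 * ((a ⬝ᵥ X ω) * (b ⬝ᵥ X ω))) μ := hint.const_mul 2
    have h1 := hsqint (a + b)
    rw [hexp] at h1
    rw [integral_add hA hB, integral_add (hmem2 a).integrable_sq (hmem2 b).integrable_sq,
      MeasureTheory.integral_const_mul, hsqint a, hsqint b] at h1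
    have hq : (a + b) ⬝ᵥ (Sig *ᵥ (a + b))
        = a ⬝ᵥ (Sig *ᵥ a) + b ⬝ᵥ (Sig *ᵥ b) + 2 * (a ⬝ᵥ (Sig *ᵥ b)) := by
      rw [Matrix.mulVec_add, add_dotProduct, dotProduct_add,
        dotProduct_add, dot_symm Sig hSigpd.isHermitian b a]
      ring
    rw [hq] at h1
    linarith
  -- coordinates are in L²
  have hXcoord : ∀ i : Fin p, (fun ω => (Pi.single i 1 : Fin p → ℝ) ⬝ᵥ X ω)
      = fun ω => X ω i := by
    intro i; funext ω; rw [single_dotProduct, one_mul]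
  have hXiL2 : ∀ i : Fin p, MemLp (fun ω => X ω i) 2 μ := by
    intro i; have := hmem2 (Pi.single i 1); rwa [hXcoord i] at this
  -- moment identities
  have hmom : ∀ i k : Fin p, ∫ ω, X ω i * X ω k ∂μ = Sig i k := by
    intro i k
    have h := hcross (Pi.single i 1) (Pi.single k 1)
    simpa [single_dotProduct, Matrix.mulVec_single] using h
  -- basic integrability / notation
  set dvec : Fin p → ℝ := (fun i => ∫ ω, X ω i * Y ω ∂μ) with hdvec
  set cvec : {i : Fin p // i ≠ j} → ℝ := (fun i => ∫ ω, X ω i.val * Y ω ∂μ) with hcvec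
  have hXY : ∀ i : Fin p, Integrable (fun ω => X ω i * Y ω) μ := fun i =>
    l2_mul_integrable (hXiL2 i) hY2
  have hsum : ∀ (v : {i : Fin p // i ≠ j} → ℝ) (ω : Ωs),
      (∑ i : {i : Fin p // i ≠ j}, X ω i.val * v i) = extFun j v ⬝ᵥ X ω := by
    intro v ω
    rw [dotProduct, sum_split j (fun k => extFun j v k * X ω k)]
    simp [mul_comm]
  -- expansion of the L² objective
  have hF : ∀ v : {i : Fin p // i ≠ j} → ℝ,
      ∫ ω, (Y ω - ∑ i : {i : Fin p // i ≠ j}, X ω i.val * v i) ^ 2 ∂μ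
        = (∫ ω, (Y ω) ^ 2 ∂μ) - 2 * (extFun j v ⬝ᵥ dvec)
            + extFun j v ⬝ᵥ (Sig *ᵥ extFun j v) := by
    intro v
    have hrw : (fun ω => (Y ω - ∑ i : {i : Fin p // i ≠ j}, X ω i.val * v i) ^ 2)
        = fun ω => ((Y ω) ^ 2 - 2 * (Y ω * (extFun j v ⬝ᵥ X ω)))
            + (extFun j v ⬝ᵥ X ω) ^ 2 := by
      funext ω; rw [hsum v ω]; ring
    rw [hrw]
    have h2 : Integrable (fun ω => Y ω * (extFun j v ⬝ᵥ X ω)) μ :=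
      l2_mul_integrable hY2 (hmem2 _)
    have h1 : Integrable (fun ω => (Y ω) ^ 2 - 2 * (Y ω * (extFun j v ⬝ᵥ X ω))) μ :=
      hY2.integrable_sq.sub (h2.const_mul 2)
    rw [integral_add h1 (hmem2 _).integrable_sq,
      integral_sub hY2.integrable_sq (h2.const_mul 2),
      MeasureTheory.integral_const_mul, hsqint]
    have h3 : (fun ω => Y ω * (extFun j v ⬝ᵥ X ω))
        = fun ω => ∑ i : Fin p, extFun j v i * (X ω i * Y ω) := by
      funext ω; rw [dotProduct, Finset.mul_sum]
      exact Finset.sum_congr rfl fun i _ => by ring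
    have h4 : ∫ ω, Y ω * (extFun j v ⬝ᵥ X ω) ∂μ = extFun j v ⬝ᵥ dvec := by
      rw [h3, integral_finset_sum _ fun i _ => (hXY i).const_mul _, dotProduct]
      exact Finset.sum_congr rfl fun i _ => MeasureTheory.integral_const_mul _ _
    rw [h4]
  -- matrix algebra facts
  have hmv : ∀ (y : {i : Fin p // i ≠ j} → ℝ) (i : Fin p),
      (Sig *ᵥ extFun j y) i = ∑ k : {i : Fin p // i ≠ j}, Sig i k.val * y k := by
    intro y i
    rw [Matrix.mulVec, dotProduct, sum_split j (fun k => Sig i k * extFun j y k)]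
    simp
  have hE1 : ∀ x y : {i : Fin p // i ≠ j} → ℝ,
      extFun j x ⬝ᵥ (Sig *ᵥ extFun j y) = x ⬝ᵥ (Sigj *ᵥ y) := by
    intro x y
    rw [dotProduct, sum_split j (fun k => extFun j x k * (Sig *ᵥ extFun j y) k)]
    simp only [extFun_self, zero_mul, extFun_val, zero_add]
    rw [dotProduct]
    refine Finset.sum_congr rfl fun i _ => ?_
    rw [hmv, Matrix.mulVec, dotProduct, hSigj]
    simp [Matrix.submatrix_apply]
  have hγ' : ∀ i : {i : Fin p // i ≠ j}, γ i = Sig j i.val := by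
    intro i; rw [hγ]; exact hmom j i.val
  have hsymS : ∀ i k : Fin p, Sig i k = Sig k i := by
    intro i k; simpa using hSigpd.isHermitian.apply k i
  have hE0 : ∀ (v : {i : Fin p // i ≠ j} → ℝ) (u : Fin p → ℝ),
      extFun j v ⬝ᵥ u = ∑ k : {i : Fin p // i ≠ j}, v k * u k.val := by
    intro v u
    rw [dotProduct, sum_split j (fun k => extFun j v k * u k)]
    simp
  have hE2 : ∀ y : {i : Fin p // i ≠ j} → ℝ,
      Pi.single j 1 ⬝ᵥ (Sig *ᵥ extFun j y) = γ ⬝ᵥ y := by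
    intro y
    rw [single_dotProduct, one_mul, hmv, dotProduct]
    exact Finset.sum_congr rfl fun i _ => by rw [hγ' i]
  -- Sigj is positive definite
  have hSigjpd : Sigj.PosDef := by
    refine Matrix.PosDef.of_dotProduct_mulVec_pos ?_ ?_
    · rw [hSigj]; exact hSigpd.isHermitian.submatrix _
    · intro x hx
      have hxe : extFun j x ≠ 0 := by
        intro hc
        apply hx; funext i
        have h := congrFun hc i.val
        rw [extFun_val] at h
        simpa using h
      have h := hSigpd.dotProduct_mulVec_pos hxe
      simp only [star_trivial] at h ⊢
      rw [← hE1 x x]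
      exact h
  have hdet : IsUnit Sigj.det := hSigjpd.det_pos.ne'.isUnit
  have hSinv : ∀ x : {i : Fin p // i ≠ j} → ℝ, Sigj⁻¹ *ᵥ (Sigj *ᵥ x) = x := by
    intro x; rw [Matrix.mulVec_mulVec, Matrix.nonsing_inv_mul _ hdet, Matrix.one_mulVec]
  have hSid : ∀ x : {i : Fin p // i ≠ j} → ℝ, Sigj *ᵥ (Sigj⁻¹ *ᵥ x) = x := by
    intro x; rw [Matrix.mulVec_mulVec, Matrix.mul_nonsing_inv _ hdet, Matrix.one_mulVec]
  set w : {i : Fin p // i ≠ j} → ℝ := Sigj⁻¹ *ᵥ γ with hwdef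
  have hw : Sigj *ᵥ w = γ := hSid γ
  have hbv : Sigj *ᵥ βj = cvec := by rw [hβj]; exact hSid _
  have hβfull : Sig *ᵥ βstar = dvec := by
    rw [hβstar, Matrix.mulVec_mulVec, Matrix.mul_nonsing_inv _ hSigpd.det_pos.ne'.isUnit,
      Matrix.one_mulVec]
  set av : {i : Fin p // i ≠ j} → ℝ := (fun i => βstar i.val) with hav
  set t : ℝ := βstar j with htdef
  -- rows of the full system
  have hrowi : ∀ i : {i : Fin p // i ≠ j}, γ i * t + (Sigj *ᵥ av) i = cvec i := by
    intro i
    have h := congrFun hβfull i.val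
    rw [Matrix.mulVec, dotProduct, sum_split j (fun k => Sig i.val k * βstar k)] at h
    have h2 : (Sigj *ᵥ av) i = ∑ k : {i : Fin p // i ≠ j}, Sig i.val k.val * av k := by
      rw [Matrix.mulVec, dotProduct, hSigj]
      exact Finset.sum_congr rfl fun k _ => by simp [Matrix.submatrix_apply]
    rw [h2]
    rw [hγ' i, hsymS j i.val]
    exact h
  have hrowj : Sig j j * t + γ ⬝ᵥ av = dvec j := by
    have h := congrFun hβfull j
    rw [Matrix.mulVec, dotProduct, sum_split j (fun k => Sig j k * βstar k)] at h
    rw [dotProduct]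
    have : ∀ k : {i : Fin p // i ≠ j}, γ k * av k = Sig j k.val * βstar k.val := by
      intro k; rw [hγ' k]
    rw [Finset.sum_congr rfl fun k _ => this k]
    exact h
  -- δ relation : av = βj + (-t) • w
  have hδ : Sigj *ᵥ (av - βj) = (-t) • γ := by
    funext i
    rw [Matrix.mulVec_sub]
    have h1 := hrowi i
    have h2 := congrFun hbv i
    simp only [Pi.sub_apply, Pi.smul_apply, smul_eq_mul]
    rw [h2]
    linarith
  have hav2 : av = βj + (-t) • w := by
    have h := congrArg (fun z => Sigj⁻¹ *ᵥ z) hδ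
    simp only [Matrix.mulVec_smul] at h
    rw [hSinv] at h
    rw [← h]; funext i; simp
  -- Schur complement positivity
  set P : ℝ := γ ⬝ᵥ w with hPdef
  set s : ℝ := Sig j j - P with hsdef
  have hwSw : w ⬝ᵥ (Sigj *ᵥ w) = P := by rw [hw, dotProduct_comm]
  have hspos : 0 < s := by
    set u : Fin p → ℝ := Pi.single j 1 - extFun j w with hu
    have hune : u ≠ 0 := by
      intro hc
      have h := congrFun hc j
      simp [hu] at h
    have h := hSigpd.dotProduct_mulVec_pos hune
    simp only [star_trivial] at h
    have hexp : u ⬝ᵥ (Sig *ᵥ u) = s := by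
      rw [hu, Matrix.mulVec_sub, sub_dotProduct, dotProduct_sub,
        dotProduct_sub, hE2 w, hE1 w w, hwSw]
      have e1 : Pi.single j 1 ⬝ᵥ (Sig *ᵥ (Pi.single j 1 : Fin p → ℝ)) = Sig j j := by
        simp [single_dotProduct, Matrix.mulVec_single]
      have e2 : extFun j w ⬝ᵥ (Sig *ᵥ (Pi.single j 1 : Fin p → ℝ)) = P := by
        rw [dot_symm Sig hSigpd.isHermitian, hE2 w]
      rw [e1, e2, hsdef]
      ring
    rw [← hexp]
    exact h
  -- the key scalar relation : t * s = dvec j - γ ⬝ᵥ βj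
  have hts : t * s = dvec j - γ ⬝ᵥ βj := by
    have h1 : γ ⬝ᵥ av = γ ⬝ᵥ βj + (-t) * P := by
      rw [hav2, dotProduct_add, dotProduct_smul, hPdef, smul_eq_mul]
    have := hrowj
    rw [h1] at this
    rw [hsdef]
    ring_nf
    ring_nf at this
    linarith
  -- scalar identities
  have hq1 : βj ⬝ᵥ (Sigj *ᵥ βj) = βj ⬝ᵥ cvec := by rw [hbv]
  have hq3 : βj ⬝ᵥ (Sigj *ᵥ w) = γ ⬝ᵥ βj := by rw [hw, dotProduct_comm]
  have hq4 : w ⬝ᵥ cvec = γ ⬝ᵥ βj := by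
    rw [← hbv, dot_symm Sigj hSigjpd.isHermitian w βj, hw, dotProduct_comm]
  have hq5 : w ⬝ᵥ (Sigj *ᵥ βj) = γ ⬝ᵥ βj := by rw [hbv, hq4]
  -- assemble
  have hVI : VIdr - VIrt = -2 * (av ⬝ᵥ cvec) + av ⬝ᵥ (Sigj *ᵥ av)
      + 2 * (βj ⬝ᵥ cvec) - βj ⬝ᵥ (Sigj *ᵥ βj) := by
    rw [hVIdr, hVIrt, hF av, hF βj]
    have hA : extFun j av ⬝ᵥ dvec = av ⬝ᵥ cvec := by
      rw [hE0, dotProduct]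
    have hB : extFun j βj ⬝ᵥ dvec = βj ⬝ᵥ cvec := by
      rw [hE0, dotProduct]
    rw [hA, hB, hE1 av av, hE1 βj βj]
    ring
  have hD : VIdr - VIrt = t ^ 2 * P := by
    rw [hVI, hav2]
    simp only [Matrix.mulVec_add, Matrix.mulVec_smul, add_dotProduct,
      dotProduct_add, smul_dotProduct, dotProduct_smul, smul_eq_mul]
    rw [hq1, hq3, hq4, hq5, hwSw]
    ring
  -- final computation
  have hgoal1 : (∫ ω, X ω j * Y ω ∂μ) = dvec j := rfl
  have hgoal2 : γ ⬝ᵥ (Sigj⁻¹ *ᵥ cvec) = γ ⬝ᵥ βj := by rw [hβj]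
  rw [hD, hgoal1, hgoal2, ← hts]
  have hs0 : s ≠ 0 := ne_of_gt hspos
  field_simp
end

section
/- Let K ∈ ℝ^{n×n} be a symmetric positive semidefinite matrix and λ > 0, and set A = K(K + λ·I_n)⁻¹. Then tr(Aᵀ A) ≤ tr(K) / (4λ). -/
open Matrix

set_option maxHeartbeats 1000000

lemma psd_trace_nonneg {m : Type*} [Fintype m] [DecidableEq m]
    {M : Matrix m m ℝ} (hM : M.PosSemidef) : 0 ≤ M.trace := by
  rw [Matrix.trace]
  apply Finset.sum_nonneg
  intro i _
  have := hM.dotProduct_mulVec_nonneg (Pi.single i 1)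
  simpa [dotProduct, Matrix.mulVec, Pi.single_apply, Finset.mul_sum] using this

/-- For symmetric positive semidefinite `K` and `λ > 0`, with
`A = K(K + λI)⁻¹`, one has `tr(AᵀA) ≤ tr(K) / (4λ)`. -/
theorem trace_AtA_le {n : ℕ} (K : Matrix (Fin n) (Fin n) ℝ) (hK : K.PosSemidef)
    (l : ℝ) (hl : 0 < l)
    (A : Matrix (Fin n) (Fin n) ℝ)
    (hA : A = K * (K + l • (1 : Matrix (Fin n) (Fin n) ℝ))⁻¹) :
    (Aᵀ * A).trace ≤ K.trace / (4 * l) := by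
  set M : Matrix (Fin n) (Fin n) ℝ := K + l • (1 : Matrix (Fin n) (Fin n) ℝ) with hMdef
  have hl1 : (l • (1 : Matrix (Fin n) (Fin n) ℝ)).PosDef := by
    have h1 : (1 : Matrix (Fin n) (Fin n) ℝ).PosDef := Matrix.PosDef.one
    constructor
    · simpa [Matrix.IsHermitian] using congrArg (l • ·) h1.1
    · exact (h1.smul hl).2
  have hM : M.PosDef := Matrix.PosDef.posSemidef_add hK hl1
  have hMu : IsUnit M.det := hM.isUnit.map detMonoidHom
  set B : Matrix (Fin n) (Fin n) ℝ := M⁻¹ with hBdef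
  have hMB : M * B = 1 := Matrix.mul_nonsing_inv M hMu
  have hBM : B * M = 1 := Matrix.nonsing_inv_mul M hMu
  have hKT : Kᵀ = K := by
    have := hK.isHermitian
    simpa using this.eq
  have hMT : Mᵀ = M := by rw [hMdef, transpose_add, hKT, transpose_smul, transpose_one]
  have hBT : Bᵀ = B := by rw [hBdef, Matrix.transpose_nonsing_inv, hMT]
  have hKM : K * M = M * K := by
    rw [hMdef, mul_add, add_mul, Matrix.mul_smul, Matrix.smul_mul, mul_one, one_mul]
  have hKB : K * B = B * K := by
    calc K * B = (B * M) * (K * B) := by rw [hBM, one_mul]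
    _ = B * ((M * K) * B) := by rw [mul_assoc, ← mul_assoc M K B]
    _ = B * (K * (M * B)) := by rw [← hKM, mul_assoc]
    _ = B * K := by rw [hMB, mul_one]
  have hAT : Aᵀ = B * K := by rw [hA, transpose_mul, hBT, hKT]
  have htr : (Aᵀ * A).trace = (K * K * (B * B)).trace := by
    rw [hAT, hA, show B * K * (K * B) = B * (K * K * B) by noncomm_ring,
      Matrix.trace_mul_comm, show K * K * B * B = K * K * (B * B) from mul_assoc _ _ _]
  open scoped MatrixOrder in
  obtain ⟨S, hSself, -, hSS⟩ := CFC.exists_sqrt_of_isSelfAdjoint_of_quasispectrumRestricts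
    hK.isHermitian (QuasispectrumRestricts.nnreal_of_nonneg hK.nonneg)
  have hST : Sᵀ = S := by
    simpa [Matrix.star_eq_conjTranspose] using hSself.star_eq
  set C : Matrix (Fin n) (Fin n) ℝ := K - l • (1 : Matrix (Fin n) (Fin n) ℝ) with hCdef
  have hCT : Cᵀ = C := by rw [hCdef, transpose_sub, hKT, transpose_smul, transpose_one]
  have hCB : C * B = B * C := by
    rw [hCdef, sub_mul, mul_sub, hKB, Matrix.smul_mul, Matrix.mul_smul, one_mul, mul_one]
  have hCBB : C * (B * B) = B * B * C := by
    rw [← mul_assoc, hCB, mul_assoc, hCB, ← mul_assoc]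
  set D : Matrix (Fin n) (Fin n) ℝ := B * C * S with hDdef
  have hDpsd : (Dᵀ * D).PosSemidef := by
    have := Matrix.posSemidef_conjTranspose_mul_self D
    simpa using this
  have hDtr : 0 ≤ (Dᵀ * D).trace := psd_trace_nonneg hDpsd
  have hC2 : C * C = M * M - (4 * l) • K := by
    rw [hCdef, hMdef]
    rw [sub_mul, mul_sub, mul_sub, add_mul, mul_add, mul_add]
    simp only [Matrix.smul_mul, Matrix.mul_smul, one_mul, mul_one, smul_smul]
    abel_nf
    module
  have hDD : (Dᵀ * D).trace = K.trace - (4 * l) * (K * K * (B * B)).trace := by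
    have h1 : Dᵀ * D = S * (C * (B * B) * C * S) := by
      rw [hDdef, transpose_mul, transpose_mul, hST, hCT, hBT]
      noncomm_ring
    have h2 : (Dᵀ * D).trace = ((B * B) * (C * C * K)).trace := by
      rw [h1, Matrix.trace_mul_comm,
        show C * (B * B) * C * S * S = C * (B * B) * C * (S * S) from mul_assoc _ _ _, hSS,
        hCBB, show B * B * C * C * K = (B * B) * (C * C * K) from by noncomm_ring]
    have hBBMM : (B * B) * (M * M) = 1 := by
      rw [show B * B * (M * M) = B * (B * M) * M from by noncomm_ring, hBM, mul_one, hBM]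
    rw [h2, hC2, sub_mul, Matrix.smul_mul, mul_sub, Matrix.mul_smul, Matrix.trace_sub,
      Matrix.trace_smul, smul_eq_mul,
      show (B * B) * (M * M * K) = ((B * B) * (M * M)) * K from by noncomm_ring,
      hBBMM, one_mul, Matrix.trace_mul_comm (B * B) (K * K)]
  rw [htr]
  rw [hDD] at hDtr
  have h4l : 0 < 4 * l := by linarith
  rw [le_div_iff₀ h4l]
  linarith [hDtr]
end

section
/- Let K ∈ ℝ^{n×n} be a symmetric positive semidefinite matrix and λ > 0, and set A = K(K + λ·I_n)⁻¹ and Σ = Aᵀ A. Then tr(Σ²) ≤ 27·tr(K) / (256·λ); in particular tr(Σ²) ≤ tr(K)/(4λ). -/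
/-!
Diagonalising `K`, the matrix `Σ² = A⁴` is `φ(K)` for `φ x = (x / (x + λ))⁴`, so `tr(Σ²)` is the
sum of `φ` over the eigenvalues of `K`. The scalar bound `φ x ≤ 27 x / (256 λ)` (the maximum of
`x³ / (x + λ)⁴` is attained at `x = 3λ`) then sums to the claim.
-/

open Matrix
open scoped ComplexOrder

theorem div_add_pow_four_le {x l : ℝ} (hx : 0 ≤ x) (hl : 0 < l) :
    (x / (x + l)) ^ 4 ≤ 27 * x / (256 * l) := by
  have hxl : 0 < x + l := by linarith
  rw [div_pow, div_le_div_iff₀ (by positivity) (by positivity)]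
  -- `27 (x + l)⁴ - 256 l x³ = (x - 3l)² (27x² + 14lx + 3l²)`
  have key : 0 ≤ x * ((x - 3 * l) ^ 2 * (27 * x ^ 2 + 14 * l * x + 3 * l ^ 2)) := by positivity
  nlinarith

namespace Matrix

variable {n 𝕜 : Type*} [Fintype n] [DecidableEq n] [RCLike 𝕜]

theorem IsHermitian.trace_cfc {A : Matrix n n 𝕜} (hA : A.IsHermitian) (f : ℝ → ℝ) :
    (cfc f A).trace = ∑ i, (f (hA.eigenvalues i) : 𝕜) := by
  rw [hA.cfc_eq, IsHermitian.cfc, Unitary.conjStarAlgAut_apply, trace_mul_cycle,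
    Unitary.coe_star_mul_self, one_mul, trace_diagonal]
  rfl

theorem PosSemidef.mul_inv_add_smul_one_eq_cfc {K : Matrix n n 𝕜} (hK : K.PosSemidef) {l : ℝ}
    (hl : 0 < l) : K * (K + l • 1)⁻¹ = cfc (fun x ↦ x / (x + l)) K := by
  have hK' : IsSelfAdjoint K := hK.isHermitian
  have hne : ∀ x ∈ spectrum ℝ K, x + l ≠ 0 := by
    rw [hK.isHermitian.spectrum_real_eq_range_eigenvalues]
    rintro - ⟨i, rfl⟩
    linarith [hK.eigenvalues_nonneg i]
  have hshift : K + l • 1 = cfc (fun x ↦ x + l) K := by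
    rw [cfc_add_const l (fun x ↦ x) K, cfc_id' ℝ K, Algebra.algebraMap_eq_smul_one]
  rw [hshift, nonsing_inv_eq_ringInverse, ← cfc_inv _ K hne]
  nth_rw 1 [← cfc_id' ℝ K]
  rw [← cfc_mul (fun x ↦ x) (fun x ↦ (x + l)⁻¹) K (hg := K.finite_real_spectrum.continuousOn _)]
  rfl

end Matrix

/-- For symmetric positive semidefinite `K` and `λ > 0`, with
`A = K(K + λI)⁻¹` and `Σ = AᵀA`, one has `tr(Σ²) ≤ 27·tr(K)/(256·λ)`, and in
particular `tr(Σ²) ≤ tr(K)/(4λ)`. -/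
theorem trace_Sigma_sq_le {n : ℕ} (K : Matrix (Fin n) (Fin n) ℝ) (hK : K.PosSemidef)
    (l : ℝ) (hl : 0 < l)
    (A : Matrix (Fin n) (Fin n) ℝ)
    (hA : A = K * (K + l • (1 : Matrix (Fin n) (Fin n) ℝ))⁻¹)
    (S : Matrix (Fin n) (Fin n) ℝ) (hS : S = Aᵀ * A) :
    (S * S).trace ≤ 27 * K.trace / (256 * l) ∧ (S * S).trace ≤ K.trace / (4 * l) := by
  have hK' : IsSelfAdjoint K := hK.isHermitian
  have hA' : A = cfc (fun x ↦ x / (x + l)) K := hA.trans (hK.mul_inv_add_smul_one_eq_cfc hl)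
  have hAT : Aᵀ = A := by
    rw [← conjTranspose_eq_transpose_of_trivial, hA']
    exact cfc_predicate (fun x : ℝ ↦ x / (x + l)) K
  have hSS : S * S = cfc (fun x ↦ (x / (x + l)) ^ 4) K := by
    rw [cfc_pow (fun x ↦ x / (x + l)) 4 K (K.finite_real_spectrum.continuousOn _), ← hA', hS, hAT]
    noncomm_ring
  have hbound : (S * S).trace ≤ 27 * K.trace / (256 * l) := by
    rw [hSS, hK.isHermitian.trace_cfc, hK.isHermitian.trace_eq_sum_eigenvalues, Finset.mul_sum,
      Finset.sum_div]
    gcongr with i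
    exact div_add_pow_four_le (hK.eigenvalues_nonneg i) hl
  have htrace : 0 ≤ K.trace / (4 * l) := div_nonneg hK.trace_nonneg (by positivity)
  refine ⟨hbound, hbound.trans ?_⟩
  linarith [show 27 * K.trace / (256 * l) = 27 / 64 * (K.trace / (4 * l)) by field_simp; ring]
end

section
/- Let K ∈ ℝ^{n×n} be a symmetric positive semidefinite matrix, λ > 0, and e, ε ∈ ℝⁿ. Then √( (e + ε)ᵀ (K + λ·I_n)⁻¹ K (K + λ·I_n)⁻¹ (e + ε) ) ≤ √( eᵀ (K + λ·I_n)⁻¹ e ) + √( εᵀε / λ ). -/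
open Matrix

open MatrixOrder in
lemma dot_sqrt_triangle {n : ℕ} {A : Matrix (Fin n) (Fin n) ℝ} (hA : A.PosSemidef)
    (x y : Fin n → ℝ) :
    Real.sqrt ((x + y) ⬝ᵥ (A *ᵥ (x + y)))
      ≤ Real.sqrt (x ⬝ᵥ (A *ᵥ x)) + Real.sqrt (y ⬝ᵥ (A *ᵥ y)) := by
  have key : ∀ w : Fin n → ℝ, Real.sqrt (w ⬝ᵥ w) = ‖(WithLp.equiv 2 (Fin n → ℝ)).symm w‖ := by
    intro w
    rw [EuclideanSpace.norm_eq]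
    simp [dotProduct, ← sq, Real.norm_eq_abs, sq_abs]
  set S := CFC.sqrt A with hS
  have hSsymm : Sᵀ = S := by simpa using (CFC.sqrt_nonneg A).posSemidef.isHermitian.eq
  have hdot : ∀ w : Fin n → ℝ, w ⬝ᵥ (A *ᵥ w) = (S *ᵥ w) ⬝ᵥ (S *ᵥ w) := by
    intro w
    conv_lhs => rw [← CFC.sqrt_mul_sqrt_self A hA.nonneg]
    rw [← mulVec_mulVec, dotProduct_mulVec, ← mulVec_transpose, hSsymm]
  rw [hdot, hdot, hdot, mulVec_add, key, key, key, WithLp.equiv_symm_apply, WithLp.toLp_add]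
  exact norm_add_le _ _

/-- For symmetric positive semidefinite `K`, `λ > 0` and vectors `e, ε`,
`√((e+ε)ᵀ(K+λI)⁻¹K(K+λI)⁻¹(e+ε)) ≤ √(eᵀ(K+λI)⁻¹e) + √(εᵀε/λ)`. -/
theorem hilbert_norm_bound {n : ℕ} (K : Matrix (Fin n) (Fin n) ℝ) (hK : K.PosSemidef)
    (l : ℝ) (hl : 0 < l) (e ε : Fin n → ℝ) :
    Real.sqrt ((e + ε) ⬝ᵥ (((K + l • (1 : Matrix (Fin n) (Fin n) ℝ))⁻¹ * K
          * (K + l • (1 : Matrix (Fin n) (Fin n) ℝ))⁻¹) *ᵥ (e + ε)))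
      ≤ Real.sqrt (e ⬝ᵥ ((K + l • (1 : Matrix (Fin n) (Fin n) ℝ))⁻¹ *ᵥ e))
        + Real.sqrt (ε ⬝ᵥ ε / l) := by
  set M := K + l • (1 : Matrix (Fin n) (Fin n) ℝ) with hMdef
  have hM : M.PosDef := by
    refine Matrix.PosDef.posSemidef_add hK ?_
    rw [smul_one_eq_diagonal]
    exact posDef_diagonal_iff.mpr fun _ => hl
  have hMunit : IsUnit M.det := isUnit_iff_ne_zero.mpr hM.det_pos.ne'
  have hMM : M * M⁻¹ = 1 := mul_nonsing_inv M hMunit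
  have hMM' : M⁻¹ * M = 1 := nonsing_inv_mul M hMunit
  have hMinv : M⁻¹.PosDef := hM.inv
  have hMinvSymm : M⁻¹ᵀ = M⁻¹ := by simpa using hMinv.isHermitian.eq
  have hKsymm : Kᵀ = K := by simpa using hK.isHermitian.eq
  have dot_self_nonneg : ∀ w : Fin n → ℝ, 0 ≤ w ⬝ᵥ w := fun w =>
    Finset.sum_nonneg fun i _ => mul_self_nonneg _
  -- Step 1: quadratic form of M⁻¹KM⁻¹ is dominated by that of M⁻¹
  set x := e + ε with hx
  have hAeq : M⁻¹ * K * M⁻¹ = M⁻¹ - l • (M⁻¹ * M⁻¹) := by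
    have : K = M - l • (1 : Matrix (Fin n) (Fin n) ℝ) := by simp [hMdef]
    rw [this]
    rw [Matrix.mul_sub, Matrix.sub_mul, hMM']
    simp [Matrix.mul_smul, Matrix.smul_mul]
  have step1 : x ⬝ᵥ ((M⁻¹ * K * M⁻¹) *ᵥ x) ≤ x ⬝ᵥ (M⁻¹ *ᵥ x) := by
    rw [hAeq, sub_mulVec, dotProduct_sub]
    have : 0 ≤ x ⬝ᵥ ((l • (M⁻¹ * M⁻¹)) *ᵥ x) := by
      rw [smul_mulVec, dotProduct_smul, ← mulVec_mulVec, dotProduct_mulVec,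
        ← mulVec_transpose, hMinvSymm]
      exact mul_nonneg hl.le (dot_self_nonneg _)
    linarith
  -- Step 3: ε ⬝ M⁻¹ ε ≤ ε⬝ε / l
  have hMsymm : Mᵀ = M := by simpa using hM.isHermitian.eq
  have hMMK : M * M - l • M = K * K + l • K := by
    rw [hMdef]
    simp only [Matrix.add_mul, Matrix.mul_add, Matrix.smul_mul, Matrix.mul_smul, smul_add,
      Matrix.one_mul, Matrix.mul_one, smul_smul]
    abel
  have step3 : ε ⬝ᵥ (M⁻¹ *ᵥ ε) ≤ ε ⬝ᵥ ε / l := by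
    have key : ∀ y : Fin n → ℝ, (M *ᵥ y) ⬝ᵥ (M⁻¹ *ᵥ (M *ᵥ y)) ≤ (M *ᵥ y) ⬝ᵥ (M *ᵥ y) / l := by
      intro y
      have hMy : M⁻¹ *ᵥ (M *ᵥ y) = y := by rw [mulVec_mulVec, hMM', one_mulVec]
      have h1 : (M *ᵥ y) ⬝ᵥ (M⁻¹ *ᵥ (M *ᵥ y)) = y ⬝ᵥ (M *ᵥ y) := by
        rw [hMy, dotProduct_comm]
      have h2 : (M *ᵥ y) ⬝ᵥ (M *ᵥ y) = y ⬝ᵥ ((M * M) *ᵥ y) := by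
        rw [dotProduct_mulVec, ← mulVec_transpose, hMsymm, mulVec_mulVec]
        exact dotProduct_comm _ _
      have hnn : 0 ≤ y ⬝ᵥ ((K * K + l • K) *ᵥ y) := by
        rw [add_mulVec, dotProduct_add]
        have hKK : 0 ≤ y ⬝ᵥ ((K * K) *ᵥ y) := by
          rw [← mulVec_mulVec, dotProduct_mulVec, ← mulVec_transpose, hKsymm]
          exact dot_self_nonneg _
        have hlK : 0 ≤ y ⬝ᵥ ((l • K) *ᵥ y) := by
          rw [smul_mulVec, dotProduct_smul]
          exact mul_nonneg hl.le (by simpa using hK.dotProduct_mulVec_nonneg y)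
        linarith
      rw [← hMMK, sub_mulVec, dotProduct_sub, smul_mulVec, dotProduct_smul, smul_eq_mul] at hnn
      rw [h1, h2, le_div_iff₀ hl]
      nlinarith [hnn]
    have hεy : ε = M *ᵥ (M⁻¹ *ᵥ ε) := by rw [mulVec_mulVec, hMM, one_mulVec]
    calc ε ⬝ᵥ (M⁻¹ *ᵥ ε) = (M *ᵥ (M⁻¹ *ᵥ ε)) ⬝ᵥ (M⁻¹ *ᵥ (M *ᵥ (M⁻¹ *ᵥ ε))) := by
          rw [← hεy]
      _ ≤ (M *ᵥ (M⁻¹ *ᵥ ε)) ⬝ᵥ (M *ᵥ (M⁻¹ *ᵥ ε)) / l := key _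
      _ = ε ⬝ᵥ ε / l := by rw [← hεy]
  -- combine
  calc Real.sqrt (x ⬝ᵥ ((M⁻¹ * K * M⁻¹) *ᵥ x))
      ≤ Real.sqrt (x ⬝ᵥ (M⁻¹ *ᵥ x)) := Real.sqrt_le_sqrt step1
    _ ≤ Real.sqrt (e ⬝ᵥ (M⁻¹ *ᵥ e)) + Real.sqrt (ε ⬝ᵥ (M⁻¹ *ᵥ ε)) :=
        dot_sqrt_triangle hMinv.posSemidef e ε
    _ ≤ Real.sqrt (e ⬝ᵥ (M⁻¹ *ᵥ e)) + Real.sqrt (ε ⬝ᵥ ε / l) := by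
        exact add_le_add_right (Real.sqrt_le_sqrt step3) _
end
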